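/- arXiv:1109.4335 — 9 statements merged into one kernel-verified Lean document; each statement's English description precedes it below -/
import Mathlib

section
/- The one-step revision map v ↦ v' has the following properties: (a) it is continuous as a map from [0,1]^P to itself; (b) it is monotone: if v ≤ w pointwise then v' ≤ w' pointwise; (c) it is inflationary: v ≤ v' pointwise; (d) the image set {v'(p) : p ∈ P} is contained in the image set {v(p) : p ∈ P}. -/
/-- The box of valuations: functions `P → ℝ` with values in `[0,1]`. -/
def unitBox (P : Type*) : Set (P → ℝ) := {v | ∀ p, v p ∈ Set.Icc (0:ℝ) 1}

/-- The one-step revision of a valuation `v` with respect to the doctrine `D`: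
`v'(p)` is the max over clauses `C ∈ D` with `p ∈ C` of the min over `q ∈ C \ {p}`
of `v(¬q)`. -/
noncomputable def step {P : Type*} (neg : P → P) (D : Finset (Finset P))
    (v : P → ℝ) : P → ℝ :=
  fun p => sSup {m : ℝ | ∃ C ∈ D, p ∈ C ∧
    m = sInf {b : ℝ | ∃ q ∈ C, q ≠ p ∧ b = v (neg q)}}

/-!
Since every clause has a literal besides `p` and every literal lies in some clause, `v'(p)` is a
nonempty finite maximum of nonempty finite minima of coordinates `v(¬q)`. Such an expression is
continuous and monotone in `v`, and its value is one of the coordinates of `v`. The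
excluded-middle clause `{p, ¬p}` contributes `v(¬¬p) = v(p)` to the maximum, so `v ≤ v'`.
-/

namespace Revision

variable {P : Type*} [DecidableEq P] (neg : P → P)

noncomputable def clauseValue (v : P → ℝ) (p : P) (C : Finset P) : ℝ :=
  sInf ((fun q => v (neg q)) '' ↑(C.erase p))

lemma step_apply_eq_sSup (D : Finset (Finset P)) (v : P → ℝ) (p : P) :
    step neg D v p = sSup (clauseValue neg v p '' ↑(D.filter (p ∈ ·))) := by
  have inner (C : Finset P) : {b : ℝ | ∃ q ∈ C, q ≠ p ∧ b = v (neg q)} =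
      (fun q => v (neg q)) '' ↑(C.erase p) := by
    ext; simp only [Finset.coe_erase]; aesop
  unfold step clauseValue
  simp_rw [← inner]
  congr 1
  ext; simp only [Finset.coe_filter]; aesop

variable {neg}

lemma clauseValue_eq_inf' {v : P → ℝ} {p : P} {C : Finset P} (h : (C.erase p).Nonempty) :
    clauseValue neg v p C = (C.erase p).inf' h (fun q => v (neg q)) :=
  (Finset.inf'_eq_csInf_image _ h _).symm

lemma clauseValue_mem_range {v : P → ℝ} {p : P} {C : Finset P} (h : (C.erase p).Nonempty) :
    clauseValue neg v p C ∈ Set.range v := by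
  obtain ⟨q, -, hq⟩ := Finset.exists_mem_eq_inf' h (fun q => v (neg q))
  exact ⟨neg q, by rw [clauseValue_eq_inf' h, hq]⟩

lemma clauseValue_mono {v w : P → ℝ} (hvw : v ≤ w) {p : P} {C : Finset P}
    (h : (C.erase p).Nonempty) : clauseValue neg v p C ≤ clauseValue neg w p C := by
  rw [clauseValue_eq_inf' h, clauseValue_eq_inf' h]
  exact Finset.inf'_mono_fun fun q _ => hvw (neg q)

lemma continuous_clauseValue {p : P} {C : Finset P} (h : (C.erase p).Nonempty) :
    Continuous fun v : P → ℝ => clauseValue neg v p C := by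
  simp_rw [clauseValue_eq_inf' h]
  exact Continuous.finset_inf'_apply h fun q _ => continuous_apply (neg q)

lemma clauseValue_pair (hinv : ∀ p, neg (neg p) = p) (v : P → ℝ) {p : P} (hp : neg p ≠ p) :
    clauseValue neg v p {p, neg p} = v p := by
  rw [clauseValue, Finset.erase_insert (by simpa [eq_comm] using hp)]
  simp [hinv]

variable {D : Finset (Finset P)}

lemma erase_nonempty_of_mem (hcard : ∀ C ∈ D, 2 ≤ C.card) {C : Finset P} (hC : C ∈ D)
    (p : P) : (C.erase p).Nonempty :=
  (Finset.one_lt_card_iff_nontrivial.1 (hcard C hC)).erase_nonempty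

lemma filter_mem_nonempty (hcover : ∀ p, ∃ C ∈ D, p ∈ C) (p : P) :
    (D.filter (p ∈ ·)).Nonempty := by
  obtain ⟨C, hC, hp⟩ := hcover p
  exact ⟨C, Finset.mem_filter.2 ⟨hC, hp⟩⟩

lemma step_apply_eq_sup' (hcover : ∀ p, ∃ C ∈ D, p ∈ C) (v : P → ℝ) (p : P) :
    step neg D v p = (D.filter (p ∈ ·)).sup' (filter_mem_nonempty hcover p)
      (clauseValue neg v p) := by
  rw [step_apply_eq_sSup, Finset.sup'_eq_csSup_image]

lemma continuous_step (hcard : ∀ C ∈ D, 2 ≤ C.card) (hcover : ∀ p, ∃ C ∈ D, p ∈ C) :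
    Continuous (step neg D) := by
  refine continuous_pi fun p => ?_
  simp_rw [step_apply_eq_sup' hcover]
  exact Continuous.finset_sup'_apply _ fun C hC =>
    continuous_clauseValue (erase_nonempty_of_mem hcard (Finset.mem_filter.1 hC).1 p)

lemma monotone_step (hcard : ∀ C ∈ D, 2 ≤ C.card) (hcover : ∀ p, ∃ C ∈ D, p ∈ C) :
    Monotone (step neg D) := by
  intro v w hvw p
  rw [step_apply_eq_sup' hcover, step_apply_eq_sup' hcover]
  exact Finset.sup'_mono_fun fun C hC =>
    clauseValue_mono hvw (erase_nonempty_of_mem hcard (Finset.mem_filter.1 hC).1 p)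

lemma range_step_subset (hcard : ∀ C ∈ D, 2 ≤ C.card) (hcover : ∀ p, ∃ C ∈ D, p ∈ C)
    (v : P → ℝ) : Set.range (step neg D v) ⊆ Set.range v := by
  rintro _ ⟨p, rfl⟩
  obtain ⟨C, hC, hCv⟩ := Finset.exists_mem_eq_sup' (filter_mem_nonempty hcover p)
    (clauseValue neg v p)
  rw [step_apply_eq_sup' hcover, hCv]
  exact clauseValue_mem_range (erase_nonempty_of_mem hcard (Finset.mem_filter.1 hC).1 p)

lemma mapsTo_step_unitBox (hcard : ∀ C ∈ D, 2 ≤ C.card) (hcover : ∀ p, ∃ C ∈ D, p ∈ C) :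
    Set.MapsTo (step neg D) (unitBox P) (unitBox P) := by
  intro v hv p
  obtain ⟨q, hq⟩ := range_step_subset hcard hcover v ⟨p, rfl⟩
  exact hq ▸ hv q

lemma le_step (hinv : ∀ p, neg (neg p) = p)
    (hcard : ∀ C ∈ D, 2 ≤ C.card) (hem : ∀ p : P, ({p, neg p} : Finset P) ∈ D)
    (v : P → ℝ) : v ≤ step neg D v := by
  intro p
  have hp : neg p ≠ p := by
    rintro h
    simpa [h] using hcard _ (hem p)
  have hcover : ∀ p, ∃ C ∈ D, p ∈ C := fun p => ⟨_, hem p, Finset.mem_insert_self p _⟩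
  rw [step_apply_eq_sup' hcover, ← clauseValue_pair hinv v hp]
  exact Finset.le_sup' (clauseValue neg v p)
    (Finset.mem_filter.2 ⟨hem p, Finset.mem_insert_self p _⟩)

end Revision

theorem stmt0_general {P : Type*} [DecidableEq P]
    (neg : P → P) (hinv : ∀ p, neg (neg p) = p)
    (D : Finset (Finset P))
    (hcard : ∀ C ∈ D, 2 ≤ C.card)
    (hem : ∀ p : P, ({p, neg p} : Finset P) ∈ D) :
    -- (a) continuity as a map from [0,1]^P to itself
    (ContinuousOn (step neg D) (unitBox P) ∧
      Set.MapsTo (step neg D) (unitBox P) (unitBox P)) ∧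
    -- (b) monotonicity
    (∀ v w : P → ℝ, v ∈ unitBox P → w ∈ unitBox P → v ≤ w →
      step neg D v ≤ step neg D w) ∧
    -- (c) inflationarity
    (∀ v : P → ℝ, v ∈ unitBox P → v ≤ step neg D v) ∧
    -- (d) image set containment
    (∀ v : P → ℝ, v ∈ unitBox P →
      Set.range (step neg D v) ⊆ Set.range v) := by
  have hcover : ∀ p, ∃ C ∈ D, p ∈ C := fun p => ⟨_, hem p, Finset.mem_insert_self p _⟩
  exact ⟨⟨(Revision.continuous_step hcard hcover).continuousOn,
      Revision.mapsTo_step_unitBox hcard hcover⟩,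
    fun v w _ _ hvw => Revision.monotone_step hcard hcover hvw,
    fun v _ => Revision.le_step hinv hcard hem v,
    fun v _ => Revision.range_step_subset hcard hcover v⟩

theorem stmt0 {P : Type*} [Fintype P] [DecidableEq P]
    (neg : P → P) (hinv : ∀ p, neg (neg p) = p) (hneg : ∀ p, neg p ≠ p)
    (D : Finset (Finset P))
    (hcard : ∀ C ∈ D, 2 ≤ C.card)
    (hem : ∀ p : P, ({p, neg p} : Finset P) ∈ D) :
    -- (a) continuity as a map from [0,1]^P to itself
    (ContinuousOn (step neg D) (unitBox P) ∧
      Set.MapsTo (step neg D) (unitBox P) (unitBox P)) ∧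
    -- (b) monotonicity
    (∀ v w : P → ℝ, v ∈ unitBox P → w ∈ unitBox P → v ≤ w →
      step neg D v ≤ step neg D w) ∧
    -- (c) inflationarity
    (∀ v : P → ℝ, v ∈ unitBox P → v ≤ step neg D v) ∧
    -- (d) image set containment
    (∀ v : P → ℝ, v ∈ unitBox P →
      Set.range (step neg D v) ⊆ Set.range v) :=
  stmt0_general neg hinv D hcard hem
end

section
/- For every valuation v, the nondecreasing sequence of iterates v⁽ⁿ⁾ (v⁽⁰⁾ = v, v⁽ⁿ⁺¹⁾ = (v⁽ⁿ⁾)') is eventually constant: there exists N such that v⁽ⁿ⁾ = v⁽ᴺ⁾ for all n ≥ N. Its eventual value v* (the upper revised valuation) defines a map v ↦ v* that is continuous as a map from [0,1]^P to itself, is monotone (v ≤ w pointwise implies v* ≤ w* pointwise), satisfies v ≤ v* pointwise, and the image set {v*(p) : p ∈ P} is contained in the image set {v(p) : p ∈ P}. -/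
open Function

theorem Function.isFixedPt_iterate_of_le_self_of_mem {α : Type*} [PartialOrder α]
    {f : α → α} (hf : ∀ x, x ≤ f x) {s : Finset α} {x : α} (hs : ∀ n, f^[n] x ∈ s)
    {n : ℕ} (hn : s.card ≤ n) : IsFixedPt f (f^[n] x) := by
  have hmono : Monotone fun k => f^[k] x :=
    monotone_nat_of_le_succ fun k => by rw [iterate_succ_apply']; exact hf _
  have hfix_of_eq : ∀ i j, i < j → f^[i] x = f^[j] x → IsFixedPt f (f^[i] x) :=
    fun i j hij heq => by
      have h : f^[i + 1] x ≤ f^[j] x := hmono hij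
      rw [iterate_succ_apply', ← heq] at h
      exact le_antisymm h (hf _)
  obtain ⟨i, hi, j, hj, hij, heq⟩ := Finset.exists_ne_map_eq_of_card_lt_of_maps_to
    (s := Finset.range (n + 1)) (by simpa [Nat.lt_succ_iff] using hn)
    (fun k _ => hs k)
  obtain ⟨m, hm, hfix⟩ : ∃ m ≤ n, IsFixedPt f (f^[m] x) := by
    rw [Finset.mem_range, Nat.lt_succ_iff] at hi hj
    rcases hij.lt_or_gt with h | h
    · exact ⟨i, hi, hfix_of_eq i j h heq⟩
    · exact ⟨j, hj, hfix_of_eq j i h heq.symm⟩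
  obtain ⟨k, rfl⟩ := Nat.exists_eq_add_of_le hm
  rw [add_comm, iterate_add_apply, (hfix.iterate k).eq]
  exact hfix

section Revision

variable {P : Type*} [DecidableEq P] (neg : P → P) (D : Finset (Finset P))

lemma sInf_clause_eq_inf' (v : P → ℝ) {p : P} {C : Finset P} (hC : (C.erase p).Nonempty) :
    sInf {b : ℝ | ∃ q ∈ C, q ≠ p ∧ b = v (neg q)} = (C.erase p).inf' hC (v ∘ neg) := by
  rw [Finset.inf'_eq_csInf_image]
  refine congrArg sInf ?_
  ext b
  simp [and_assoc, eq_comm]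

lemma nonempty_filter_mem (hem : ∀ p : P, ({p, neg p} : Finset P) ∈ D) (p : P) :
    (D.filter (p ∈ ·)).Nonempty :=
  ⟨_, Finset.mem_filter.2 ⟨hem p, Finset.mem_insert_self _ _⟩⟩

lemma step_apply_eq_sup' (hem : ∀ p : P, ({p, neg p} : Finset P) ∈ D) (v : P → ℝ) (p : P) :
    step neg D v p = (D.filter (p ∈ ·)).sup' (nonempty_filter_mem neg D hem p)
      (fun C => sInf {b : ℝ | ∃ q ∈ C, q ≠ p ∧ b = v (neg q)}) := by
  rw [Finset.sup'_eq_csSup_image, step]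
  refine congrArg sSup ?_
  ext m
  simp [and_assoc, eq_comm]

lemma erase_nonempty_of_two_le_card {C : Finset P} (hC : 2 ≤ C.card) (p : P) :
    (C.erase p).Nonempty := by
  rw [← Finset.card_pos]
  have := Finset.pred_card_le_card_erase (s := C) (a := p)
  omega

lemma le_step (hinv : ∀ p, neg (neg p) = p) (hneg : ∀ p, neg p ≠ p)
    (hem : ∀ p : P, ({p, neg p} : Finset P) ∈ D) (v : P → ℝ) : v ≤ step neg D v := by
  intro p
  have hmem : ({p, neg p} : Finset P) ∈ D.filter (p ∈ ·) := by simp [hem p]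
  have hne : ({p, neg p} : Finset P).erase p = {neg p} := by
    rw [Finset.erase_insert (by simpa using (hneg p).symm)]
  rw [step_apply_eq_sup' neg D hem]
  refine le_trans ?_ (Finset.le_sup' _ hmem)
  rw [sInf_clause_eq_inf' neg v (by simp [hne]), Finset.inf'_congr _ hne (fun _ _ => rfl)]
  simp [hinv]

lemma monotone_step (hcard : ∀ C ∈ D, 2 ≤ C.card)
    (hem : ∀ p : P, ({p, neg p} : Finset P) ∈ D) : Monotone (step neg D) := by
  intro v w hvw p
  rw [step_apply_eq_sup' neg D hem, step_apply_eq_sup' neg D hem]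
  refine Finset.sup'_mono_fun fun C hC => ?_
  have hne := erase_nonempty_of_two_le_card (hcard C (Finset.mem_filter.1 hC).1) p
  rw [sInf_clause_eq_inf' neg v hne, sInf_clause_eq_inf' neg w hne]
  exact Finset.le_inf' _ _ fun q hq => (Finset.inf'_le _ hq).trans (hvw _)

lemma continuous_step (hcard : ∀ C ∈ D, 2 ≤ C.card)
    (hem : ∀ p : P, ({p, neg p} : Finset P) ∈ D) : Continuous (step neg D) := by
  refine continuous_pi fun p => ?_
  simp_rw [step_apply_eq_sup' neg D hem]
  refine Continuous.finset_sup'_apply _ fun C hC => ?_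
  have hne := erase_nonempty_of_two_le_card (hcard C (Finset.mem_filter.1 hC).1) p
  simp_rw [sInf_clause_eq_inf' neg _ hne]
  exact Continuous.finset_inf'_apply hne fun q _ => continuous_apply (neg q)

lemma step_apply_mem_range (hcard : ∀ C ∈ D, 2 ≤ C.card)
    (hem : ∀ p : P, ({p, neg p} : Finset P) ∈ D)
    (v : P → ℝ) (p : P) : step neg D v p ∈ Set.range v := by
  rw [step_apply_eq_sup' neg D hem]
  obtain ⟨C, hC, hCeq⟩ := Finset.exists_mem_eq_sup' (nonempty_filter_mem neg D hem p)
    fun C => sInf {b : ℝ | ∃ q ∈ C, q ≠ p ∧ b = v (neg q)}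
  have hne := erase_nonempty_of_two_le_card (hcard C (Finset.mem_filter.1 hC).1) p
  obtain ⟨q, -, hqeq⟩ := Finset.exists_mem_eq_inf' hne (v ∘ neg)
  exact ⟨neg q, by rw [hCeq, sInf_clause_eq_inf' neg v hne, hqeq, comp_apply]⟩

lemma range_iterate_step_subset (hcard : ∀ C ∈ D, 2 ≤ C.card)
    (hem : ∀ p : P, ({p, neg p} : Finset P) ∈ D) (v : P → ℝ) (n : ℕ) :
    Set.range ((step neg D)^[n] v) ⊆ Set.range v := by
  induction n with
  | zero => rfl
  | succ n ih =>
    rintro _ ⟨p, rfl⟩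
    rw [iterate_succ_apply']
    exact ih (step_apply_mem_range neg D hcard hem _ p)

end Revision

theorem stmt1 {P : Type*} [Fintype P] [DecidableEq P]
    (neg : P → P) (hinv : ∀ p, neg (neg p) = p) (hneg : ∀ p, neg p ≠ p)
    (D : Finset (Finset P))
    (hcard : ∀ C ∈ D, 2 ≤ C.card)
    (hem : ∀ p : P, ({p, neg p} : Finset P) ∈ D) :
    -- the sequence of iterates is nondecreasing
    (∀ v : P → ℝ, v ∈ unitBox P → ∀ n : ℕ,
      (step neg D)^[n] v ≤ (step neg D)^[n + 1] v) ∧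
    -- it is eventually constant, and its eventual value defines a map v ↦ v*
    ∃ F : (P → ℝ) → (P → ℝ),
      (∀ v : P → ℝ, v ∈ unitBox P →
        ∃ N : ℕ, ∀ n ≥ N, (step neg D)^[n] v = F v) ∧
      -- continuous as a map from [0,1]^P to itself
      ContinuousOn F (unitBox P) ∧
      Set.MapsTo F (unitBox P) (unitBox P) ∧
      -- monotone
      (∀ v w : P → ℝ, v ∈ unitBox P → w ∈ unitBox P → v ≤ w → F v ≤ F w) ∧
      -- v ≤ v*
      (∀ v : P → ℝ, v ∈ unitBox P → v ≤ F v) ∧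
      -- image set containment
      (∀ v : P → ℝ, v ∈ unitBox P → Set.range (F v) ⊆ Set.range v) := by
  set N := Fintype.card P ^ Fintype.card P
  have hle := le_step neg D hinv hneg hem
  have hrange := range_iterate_step_subset neg D hcard hem
  have hfix (v : P → ℝ) : IsFixedPt (step neg D) ((step neg D)^[N] v) := by
    refine isFixedPt_iterate_of_le_self_of_mem hle
      (s := Fintype.piFinset fun _ => Finset.univ.image v) (fun n => ?_) ?_
    · simpa [Fintype.mem_piFinset, Set.range_subset_iff] using hrange v n
    · simpa using Nat.pow_le_pow_left (Finset.card_image_le.trans_eq Finset.card_univ) _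
  refine ⟨fun v _ n => by rw [iterate_succ_apply']; exact hle _, (step neg D)^[N],
    fun v _ => ⟨N, fun n hn => ?_⟩, ((continuous_step neg D hcard hem).iterate N).continuousOn,
    fun v hv p => ?_, fun v w _ _ hvw => (monotone_step neg D hcard hem).iterate N hvw,
    fun v _ => id_le_iterate_of_id_le hle N v, fun v _ => hrange v N⟩
  · obtain ⟨k, rfl⟩ := Nat.exists_eq_add_of_le hn
    rw [add_comm, iterate_add_apply, ((hfix v).iterate k).eq]
  · obtain ⟨q, hq⟩ := hrange v N ⟨p, rfl⟩
    exact hq ▸ hv q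
end

section
/- The upper revised valuation v* is the least valuation lying above v that is invariant under one-step revision: namely, v ≤ v* pointwise, (v*)' = v*, and for every valuation w with v ≤ w pointwise and w' = w, one has v* ≤ w pointwise. -/
/-! The upper revised valuation is reached by iterating a monotone inflationary map from `v`;
monotonicity forces every fixed point above `v` to stay above all the iterates. -/

theorem isLeast_fixedPoints_of_iterate_eventually_eq {α : Type*} [Preorder α] {f : α → α}
    (hf : Monotone f) (hid : id ≤ f) {x y : α} (hlim : ∃ N : ℕ, ∀ n ≥ N, f^[n] x = y) :
    IsLeast {w | x ≤ w ∧ f w = w} y := by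
  obtain ⟨N, hN⟩ := hlim
  have hy : f^[N] x = y := hN N le_rfl
  refine ⟨⟨hy ▸ Function.id_le_iterate_of_id_le hid N x, ?_⟩, ?_⟩
  · simpa only [Function.iterate_succ_apply', hy] using hN (N + 1) N.le_succ
  · rintro w ⟨hxw, hw⟩
    calc y = f^[N] x := hy.symm
      _ ≤ f^[N] w := hf.iterate N hxw
      _ = w := Function.iterate_fixed hw N

namespace step

variable {P : Type*} (neg : P → P) (D : Finset (Finset P))

theorem apply_eq_iSup_iInf (v : P → ℝ) (p : P) :
    step neg D v p = ⨆ C : {C : D // p ∈ C.1}, ⨅ q : {q : C.1.1 // q.1 ≠ p}, v (neg q) := by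
  have hinner (C : Finset P) :
      {b : ℝ | ∃ q ∈ C, q ≠ p ∧ b = v (neg q)} =
        Set.range fun q : {q : C // q.1 ≠ p} => v (neg q) := by
    ext b
    exact ⟨fun ⟨q, hq, hqp, hb⟩ => ⟨⟨⟨q, hq⟩, hqp⟩, hb.symm⟩,
      fun ⟨q, hb⟩ => ⟨q, q.1.2, q.2, hb.symm⟩⟩
  simp only [step, iSup, iInf, hinner]
  congr 1
  ext m
  exact ⟨fun ⟨C, hC, hp, hm⟩ => ⟨⟨⟨C, hC⟩, hp⟩, hm.symm⟩,
    fun ⟨C, hm⟩ => ⟨C.1, C.1.2, C.2, hm.symm⟩⟩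

theorem monotone : Monotone (step neg D) := by
  intro v w hvw p
  simp only [apply_eq_iSup_iInf]
  refine ciSup_mono (Finite.bddAbove_range _) fun C => ?_
  exact ciInf_mono (Finite.bddBelow_range _) fun q => hvw (neg q)

/-- Witnessed at `p` by the excluded-middle clause `{p, ¬p}`, whose other literal `¬p`
contributes `v (¬¬p) = v p`. -/
theorem le_self_step [DecidableEq P] (hinv : ∀ p, neg (neg p) = p)
    (hneg : ∀ p, neg p ≠ p) (hem : ∀ p : P, ({p, neg p} : Finset P) ∈ D) (v : P → ℝ) : v ≤ step neg D v := by
  intro p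
  rw [apply_eq_iSup_iInf]
  have hmem : neg p ∈ ({p, neg p} : Finset P) :=
    Finset.mem_insert_of_mem (Finset.mem_singleton_self _)
  have : Nonempty {q : ({p, neg p} : Finset P) // q.1 ≠ p} := ⟨⟨⟨neg p, hmem⟩, hneg p⟩⟩
  refine le_ciSup_of_le (Finite.bddAbove_range _)
    ⟨⟨{p, neg p}, hem p⟩, Finset.mem_insert_self _ _⟩ ?_
  refine le_ciInf fun ⟨⟨q, hq⟩, hqp⟩ => ?_
  obtain rfl : q = neg p := by simpa [hqp] using hq
  rw [hinv]

end step

theorem stmt2_general {P : Type*} [DecidableEq P]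
    (neg : P → P) (hinv : ∀ p, neg (neg p) = p) (hneg : ∀ p, neg p ≠ p)
    (D : Finset (Finset P))
    (hem : ∀ p : P, ({p, neg p} : Finset P) ∈ D)
    (v vstar : P → ℝ)
    (hlim : ∃ N : ℕ, ∀ n ≥ N, (step neg D)^[n] v = vstar) :
    v ≤ vstar ∧ step neg D vstar = vstar ∧
      ∀ w : P → ℝ, w ∈ unitBox P → v ≤ w → step neg D w = w → vstar ≤ w := by
  obtain ⟨⟨hv, hfix⟩, hleast⟩ := isLeast_fixedPoints_of_iterate_eventually_eq
    (step.monotone neg D) (step.le_self_step neg D hinv hneg hem) hlim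
  exact ⟨hv, hfix, fun w _ hvw hw => hleast ⟨hvw, hw⟩⟩

/-- The upper revised valuation `v*` (the eventual value of the nondecreasing
sequence of iterates of one-step revision starting from `v`) is the least
valuation lying above `v` that is invariant under one-step revision. -/
theorem stmt2 {P : Type*} [Fintype P] [DecidableEq P]
    (neg : P → P) (hinv : ∀ p, neg (neg p) = p) (hneg : ∀ p, neg p ≠ p)
    (D : Finset (Finset P))
    (hcard : ∀ C ∈ D, 2 ≤ C.card)
    (hem : ∀ p : P, ({p, neg p} : Finset P) ∈ D)
    (v vstar : P → ℝ) (hv : v ∈ unitBox P)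
    (hlim : ∃ N : ℕ, ∀ n ≥ N, (step neg D)^[n] v = vstar) :
    v ≤ vstar ∧ step neg D vstar = vstar ∧
      ∀ w : P → ℝ, w ∈ unitBox P → v ≤ w → step neg D w = w → vstar ≤ w :=
  stmt2_general neg hinv hneg D hem v vstar hlim
end

section
/- For every margin μ ∈ [0,1], the decision of margin μ associated with the upper revised valuation v* is definitely consistent with the doctrine: for every clause C ∈ D and every literal p ∈ C, if v*(¬q) − v*(q) > μ for every q ∈ C \ {p}, then v*(p) − v*(¬p) > μ. -/
/-!
The upper revised valuation `v*` is a fixed point of revision, so for `p ∈ C ∈ D` the value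
`v*(p)` dominates `v*(¬q₀)`, where `q₀` minimises `v*(¬q)` over `C \ {p}`. Applying the same
rule to `q₀` gives some `q₁ ∈ C \ {q₀}` with `v*(¬q₁) ≤ v*(q₀)`. If `q₁ = p` the two inequalities
transfer the margin of `q₀` to `p`; otherwise minimality of `q₀` gives `v*(¬q₀) ≤ v*(q₀)`,
contradicting the positive margin of `q₀`.
-/

theorem Function.isFixedPt_of_iterate_eventually_eq {α : Type*} {f : α → α} {x y : α}
    (h : ∃ N : ℕ, ∀ n ≥ N, f^[n] x = y) : Function.IsFixedPt f y := by
  obtain ⟨N, hN⟩ := h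
  have hsucc := hN (N + 1) N.le_succ
  rwa [Function.iterate_succ_apply', hN N le_rfl] at hsucc

section Revision

variable {P : Type*} {neg : P → P} {D : Finset (Finset P)} {w : P → ℝ}

theorem exists_min_neg_le_of_step_le [DecidableEq P] (hw : step neg D w ≤ w)
    {C : Finset P} (hC : C ∈ D) {p : P} (hp : p ∈ C) (hne : (C.erase p).Nonempty) :
    ∃ q ∈ C, q ≠ p ∧ w (neg q) ≤ w p ∧ ∀ r ∈ C, r ≠ p → w (neg q) ≤ w (neg r) := by
  obtain ⟨q, hq, hmin⟩ := (C.erase p).exists_min_image (fun r => w (neg r)) hne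
  obtain ⟨hqp, hqC⟩ := Finset.mem_erase.mp hq
  have hmin' : ∀ r ∈ C, r ≠ p → w (neg q) ≤ w (neg r) :=
    fun r hrC hrp => hmin r (Finset.mem_erase.mpr ⟨hrp, hrC⟩)
  have hinf : sInf {b : ℝ | ∃ r ∈ C, r ≠ p ∧ b = w (neg r)} = w (neg q) :=
    IsLeast.csInf_eq ⟨⟨q, hqC, hqp, rfl⟩, by rintro b ⟨r, hrC, hrp, rfl⟩; exact hmin' r hrC hrp⟩
  have hbdd : BddAbove {m : ℝ | ∃ C ∈ D, p ∈ C ∧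
      m = sInf {b : ℝ | ∃ r ∈ C, r ≠ p ∧ b = w (neg r)}} := by
    refine ((D : Set (Finset P)).toFinite.image
      (fun C => sInf {b : ℝ | ∃ r ∈ C, r ≠ p ∧ b = w (neg r)})).bddAbove.mono ?_
    rintro m ⟨C, hC, -, rfl⟩
    exact ⟨C, hC, rfl⟩
  have hstep : w (neg q) ≤ step neg D w p := hinf ▸ le_csSup hbdd ⟨C, hC, hp, rfl⟩
  exact ⟨q, hqC, hqp, hstep.trans (hw p), hmin'⟩

theorem sub_neg_gt_of_step_le (hw : step neg D w ≤ w) {μ : ℝ} (hμ : 0 ≤ μ)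
    {C : Finset P} (hC : C ∈ D) (hcard : 2 ≤ C.card) {p : P} (hp : p ∈ C)
    (hmargin : ∀ q ∈ C, q ≠ p → w (neg q) - w q > μ) :
    w p - w (neg p) > μ := by
  classical
  have herase : ∀ r ∈ C, (C.erase r).Nonempty := fun r hr => by
    rw [← Finset.card_pos, Finset.card_erase_of_mem hr]
    omega
  obtain ⟨q₀, hq₀C, hq₀p, hq₀p_le, hq₀min⟩ :=
    exists_min_neg_le_of_step_le hw hC hp (herase p hp)
  obtain ⟨q₁, hq₁C, -, hq₁q₀_le, -⟩ :=
    exists_min_neg_le_of_step_le hw hC hq₀C (herase q₀ hq₀C)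
  have hq₀margin := hmargin q₀ hq₀C hq₀p
  by_cases hq₁p : q₁ = p
  · subst hq₁p
    linarith
  · linarith [hq₀min q₁ hq₁C hq₁p]

end Revision

theorem stmt3_general {P : Type*}
    (neg : P → P)
    (D : Finset (Finset P))
    (hcard : ∀ C ∈ D, 2 ≤ C.card)
    (μ : ℝ) (hμ : μ ∈ Set.Icc (0:ℝ) 1)
    (v vstar : P → ℝ)
    (hlim : ∃ N : ℕ, ∀ n ≥ N, (step neg D)^[n] v = vstar) :
    ∀ C ∈ D, ∀ p ∈ C,
      (∀ q ∈ C, q ≠ p → vstar (neg q) - vstar q > μ) →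
      vstar p - vstar (neg p) > μ := by
  intro C hC p hp hmargin
  have hfix : step neg D vstar = vstar := Function.isFixedPt_of_iterate_eventually_eq hlim
  exact sub_neg_gt_of_step_le hfix.le hμ.1 hC (hcard C hC) hp hmargin

/-- For every margin `μ ∈ [0,1]`, the decision of margin `μ` associated with the
upper revised valuation `v*` is definitely consistent with the doctrine. -/
theorem stmt3 {P : Type*} [Fintype P] [DecidableEq P]
    (neg : P → P) (hinv : ∀ p, neg (neg p) = p) (hneg : ∀ p, neg p ≠ p)
    (D : Finset (Finset P))
    (hcard : ∀ C ∈ D, 2 ≤ C.card)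
    (hem : ∀ p : P, ({p, neg p} : Finset P) ∈ D)
    (μ : ℝ) (hμ : μ ∈ Set.Icc (0:ℝ) 1)
    (v vstar : P → ℝ) (hv : v ∈ unitBox P)
    (hlim : ∃ N : ℕ, ∀ n ≥ N, (step neg D)^[n] v = vstar) :
    ∀ C ∈ D, ∀ p ∈ C,
      (∀ q ∈ C, q ≠ p → vstar (neg q) - vstar q > μ) →
      vstar p - vstar (neg p) > μ :=
  stmt3_general neg D hcard μ hμ v vstar hlim
end

section
/- Let the initial valuation satisfy v(s_x) = v(¬s_x) = 0 for all x ∈ I, with arbitrary values v(p_{xy}) ∈ [0,1], and set c_x = max over y ≠ x of v(p_{yx}). Then x is a supremacy winner, i.e., v*(s_x) ≥ v*(¬s_x) for the upper revised valuation v*, if and only if x minimizes c_x, i.e., c_x ≤ c_y for all y ∈ I. -/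
/-- A valuation for the supremacy doctrine: degrees of belief for the literals
`s_x` ("x is supreme"), `¬s_x`, and `p_{xy}` ("x is preferable to y", for
distinct `x, y`), under the identification `¬p_{xy} = p_{yx}`. -/
structure SVal (I : Type*) where
  s : I → ℝ
  ns : I → ℝ
  p : I → I → ℝ

/-- Max over a (possibly empty) index set of reals: the empty max is `0`
(note `Real.sSup_empty = 0`). -/
noncomputable def sup0 (S : Set ℝ) : ℝ := sSup S

open Classical in
/-- Min over a (possibly empty) index set of reals: the empty min is `1`. -/
noncomputable def inf1 (S : Set ℝ) : ℝ := if S.Nonempty then sInf S else 1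

/-- The one-step revision operator associated with the supremacy doctrine. -/
noncomputable def Tsup {I : Type*} (v : SVal I) : SVal I where
  s := fun x => max (v.s x)
    (max (inf1 {b : ℝ | ∃ y, y ≠ x ∧ b = v.ns y})
         (inf1 {b : ℝ | ∃ y, y ≠ x ∧ b = v.p x y}))
  ns := fun x => max (v.ns x) (sup0 {b : ℝ | ∃ y, y ≠ x ∧ b = v.p y x})
  p := fun x y => max (v.p x y)
    (max (v.s x)
         (min (v.ns y) (inf1 {b : ℝ | ∃ z, z ≠ x ∧ z ≠ y ∧ b = v.p y z})))

/-!
The revision stabilises at `v*(¬s_a) = c_a` and `v*(s_a) = min_{y ≠ a} c_y`. For the upper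
bounds, these values together with `v(p_{ab}) ≤ max (v₀(p_{ab})) (min_{y ≠ a} c_y)` form an
invariant of `T` that holds initially. For the lower bounds, `p` only grows, so the fixed-point
equation for `¬s_a` gives `v*(¬s_a) ≥ c_a`, and then the one for `s_a` gives
`v*(s_a) ≥ min_{y ≠ a} v*(¬s_y) ≥ min_{y ≠ a} c_y`. Hence `x` wins iff `c_x ≤ min_{y ≠ x} c_y`.
-/

lemma le_sup0 {S : Set ℝ} (hS : S.Finite) {b : ℝ} (hb : b ∈ S) : b ≤ sup0 S :=
  le_csSup hS.bddAbove hb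

lemma sup0_le {S : Set ℝ} (hS : S.Nonempty) {a : ℝ} (h : ∀ b ∈ S, b ≤ a) : sup0 S ≤ a :=
  csSup_le hS h

lemma inf1_le {S : Set ℝ} (hS : S.Finite) {b : ℝ} (hb : b ∈ S) : inf1 S ≤ b := by
  rw [inf1, if_pos ⟨b, hb⟩]
  exact csInf_le hS.bddBelow hb

lemma le_inf1_iff {S : Set ℝ} (hS : S.Finite) (hne : S.Nonempty) {a : ℝ} :
    a ≤ inf1 S ↔ ∀ b ∈ S, a ≤ b := by
  rw [inf1, if_pos hne]
  exact le_csInf_iff hS.bddBelow hne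

lemma finite_setOf_exists_and_eq {α : Type*} [Finite α] (Q : α → Prop) (f : α → ℝ) :
    {b : ℝ | ∃ y, Q y ∧ b = f y}.Finite :=
  (Set.finite_range f).subset (by rintro _ ⟨y, -, rfl⟩; exact ⟨y, rfl⟩)

namespace SVal

variable {I : Type*}

/-- The paper's `c_x`. -/
noncomputable def maxAgainst (v : SVal I) (x : I) : ℝ :=
  sup0 {b : ℝ | ∃ y, y ≠ x ∧ b = v.p y x}

noncomputable def minOthers (f : I → ℝ) (x : I) : ℝ :=
  inf1 {b : ℝ | ∃ y, y ≠ x ∧ b = f y}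

lemma Tsup_s (u : SVal I) (x : I) :
    (Tsup u).s x = max (u.s x) (max (minOthers u.ns x) (minOthers (u.p x) x)) := rfl

lemma Tsup_ns (u : SVal I) (x : I) : (Tsup u).ns x = max (u.ns x) (u.maxAgainst x) := rfl

lemma p_le_iterate_p (v : SVal I) (n : ℕ) (a b : I) : v.p a b ≤ (Tsup^[n] v).p a b := by
  induction n with
  | zero => rfl
  | succ n ih => rw [Function.iterate_succ_apply']; exact ih.trans (le_max_left _ _)

lemma minOthers_ns_le_s_of_fixed {u : SVal I} (hfix : Tsup u = u) (x : I) :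
    minOthers u.ns x ≤ u.s x :=
  calc minOthers u.ns x ≤ (Tsup u).s x := le_max_of_le_right (le_max_left _ _)
    _ = u.s x := by rw [hfix]

lemma nonempty_setOf_ne_and_eq [Nontrivial I] (f : I → ℝ) (x : I) :
    {b : ℝ | ∃ y, y ≠ x ∧ b = f y}.Nonempty :=
  let ⟨y, hy⟩ := exists_ne x
  ⟨f y, y, hy, rfl⟩

variable [Finite I]

lemma p_le_maxAgainst (v : SVal I) {x y : I} (hy : y ≠ x) : v.p y x ≤ v.maxAgainst x :=
  le_sup0 (finite_setOf_exists_and_eq _ _) ⟨y, hy, rfl⟩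

lemma minOthers_le (f : I → ℝ) {x y : I} (hy : y ≠ x) : minOthers f x ≤ f y :=
  inf1_le (finite_setOf_exists_and_eq _ _) ⟨y, hy, rfl⟩

variable [Nontrivial I]

lemma le_minOthers_iff {f : I → ℝ} {x : I} {a : ℝ} :
    a ≤ minOthers f x ↔ ∀ y, y ≠ x → a ≤ f y := by
  rw [minOthers, le_inf1_iff (finite_setOf_exists_and_eq _ _) (nonempty_setOf_ne_and_eq f x)]
  exact ⟨fun h y hy => h _ ⟨y, hy, rfl⟩, by rintro h _ ⟨y, hy, rfl⟩; exact h y hy⟩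

lemma exists_minOthers_eq (f : I → ℝ) (x : I) : ∃ y, y ≠ x ∧ minOthers f x = f y := by
  have hmem := (nonempty_setOf_ne_and_eq f x).csInf_mem (finite_setOf_exists_and_eq _ _)
  obtain ⟨y, hy, heq⟩ := hmem
  exact ⟨y, hy, by rw [minOthers, inf1, if_pos (nonempty_setOf_ne_and_eq f x), heq]⟩

lemma minOthers_mono {f g : I → ℝ} (h : ∀ y, f y ≤ g y) (x : I) :
    minOthers f x ≤ minOthers g x :=
  le_minOthers_iff.mpr fun y hy => (minOthers_le f hy).trans (h y)

lemma maxAgainst_nonneg {v : SVal I} (hp : ∀ a b, a ≠ b → 0 ≤ v.p a b) (x : I) :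
    0 ≤ v.maxAgainst x :=
  let ⟨y, hy⟩ := exists_ne x
  (hp y x hy).trans (v.p_le_maxAgainst hy)

end SVal

section Revision

open SVal

variable {I : Type*} [Finite I]

structure MinimaxBounds (v u : SVal I) : Prop where
  s_le : ∀ a, u.s a ≤ minOthers v.maxAgainst a
  ns_le : ∀ a, u.ns a ≤ v.maxAgainst a
  p_le : ∀ a b, a ≠ b → u.p a b ≤ max (v.p a b) (minOthers v.maxAgainst a)

variable [Nontrivial I]

lemma minimaxBounds_self {v : SVal I} (hs : ∀ x, v.s x = 0) (hns : ∀ x, v.ns x = 0)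
    (hp : ∀ a b, a ≠ b → 0 ≤ v.p a b) : MinimaxBounds v v where
  s_le a := (hs a).trans_le (le_minOthers_iff.mpr fun y _ => maxAgainst_nonneg hp y)
  ns_le a := (hns a).trans_le (maxAgainst_nonneg hp a)
  p_le _ _ _ := le_max_left _ _

lemma MinimaxBounds.Tsup {v u : SVal I} (h : MinimaxBounds v u) : MinimaxBounds v (Tsup u) := by
  have hp_le : ∀ a b, a ≠ b → u.p a b ≤ v.maxAgainst b := fun a b hab =>
    (h.p_le a b hab).trans (max_le (v.p_le_maxAgainst hab) (minOthers_le _ hab.symm))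
  refine ⟨fun a => ?_, fun a => ?_, fun a b hab => ?_⟩
  · obtain ⟨y, hya, hy⟩ := exists_minOthers_eq v.maxAgainst a
    rw [Tsup_s]
    refine max_le (h.s_le a) (max_le (minOthers_mono h.ns_le a) ?_)
    exact (minOthers_le _ hya).trans ((hp_le a y hya.symm).trans hy.ge)
  · rw [Tsup_ns]
    refine max_le (h.ns_le a) (sup0_le (nonempty_setOf_ne_and_eq _ a) ?_)
    rintro _ ⟨y, hy, rfl⟩
    exact hp_le y a hy
  · refine max_le (h.p_le a b hab) (max_le ((h.s_le a).trans (le_max_right _ _)) ?_)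
    refine le_trans ?_ (le_max_right (v.p a b) (minOthers v.maxAgainst a))
    obtain ⟨y, hya, hy⟩ := exists_minOthers_eq v.maxAgainst a
    rw [hy]
    -- `c_y` is the minimum; if `y ≠ b`, then `y` is a third option and `p_{by} ≤ c_y` bounds.
    by_cases hyb : y = b
    · subst hyb
      exact (min_le_left _ _).trans (h.ns_le y)
    · have hS : {c | ∃ z, z ≠ a ∧ z ≠ b ∧ c = u.p b z}.Finite := by
        simpa only [and_assoc] using finite_setOf_exists_and_eq (fun z => z ≠ a ∧ z ≠ b) (u.p b)
      exact (min_le_right _ _).trans ((inf1_le hS ⟨y, hya, hyb, rfl⟩).trans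
        (hp_le b y (Ne.symm hyb)))

lemma minimaxBounds_iterate {v : SVal I} (h : MinimaxBounds v v) (n : ℕ) :
    MinimaxBounds v (Tsup^[n] v) := by
  induction n with
  | zero => exact h
  | succ n ih => rw [Function.iterate_succ_apply']; exact ih.Tsup

lemma maxAgainst_le_ns_of_fixed {v u : SVal I} (hfix : Tsup u = u)
    (hp : ∀ a b, v.p a b ≤ u.p a b) (x : I) : v.maxAgainst x ≤ u.ns x := by
  rw [← hfix, Tsup_ns]
  refine le_max_of_le_right (sup0_le (nonempty_setOf_ne_and_eq _ x) ?_)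
  rintro _ ⟨y, hy, rfl⟩
  exact (hp y x).trans (u.p_le_maxAgainst hy)

lemma ns_eq_and_s_eq_of_fixed {v : SVal I} (hs : ∀ x, v.s x = 0) (hns : ∀ x, v.ns x = 0)
    (hp : ∀ a b, a ≠ b → 0 ≤ v.p a b) {N : ℕ} (hfix : Tsup (Tsup^[N] v) = Tsup^[N] v) :
    (Tsup^[N] v).ns = v.maxAgainst ∧ (Tsup^[N] v).s = minOthers v.maxAgainst := by
  have hbound := minimaxBounds_iterate (minimaxBounds_self hs hns hp) N
  have hns_eq : (Tsup^[N] v).ns = v.maxAgainst := funext fun x =>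
    le_antisymm (hbound.ns_le x) (maxAgainst_le_ns_of_fixed hfix (p_le_iterate_p v N) x)
  refine ⟨hns_eq, funext fun x => le_antisymm (hbound.s_le x) ?_⟩
  exact hns_eq ▸ minOthers_ns_le_s_of_fixed hfix x

end Revision

theorem stmt7_general {I : Type*} [Fintype I]
    (hcard : 2 ≤ Fintype.card I)
    (v : SVal I)
    (hbox : ∀ x y : I, x ≠ y → v.p x y ∈ Set.Icc (0:ℝ) 1)
    (hs : ∀ x, v.s x = 0) (hns : ∀ x, v.ns x = 0)
    (c : I → ℝ) (hc : ∀ x, c x = sup0 {b : ℝ | ∃ y, y ≠ x ∧ b = v.p y x})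
    (vstar : SVal I) (hstar : ∃ N : ℕ, ∀ n ≥ N, Tsup^[n] v = vstar)
    (x : I) :
    vstar.ns x ≤ vstar.s x ↔ ∀ y : I, c x ≤ c y := by
  have : Nontrivial I := Fintype.one_lt_card_iff_nontrivial.mp hcard
  obtain ⟨N, hN⟩ := hstar
  have hfix : Tsup (Tsup^[N] v) = Tsup^[N] v := by
    rw [← Function.iterate_succ_apply' Tsup N v, hN (N + 1) N.le_succ, hN N le_rfl]
  obtain ⟨hns_eq, hs_eq⟩ := ns_eq_and_s_eq_of_fixed hs hns (fun a b h => (hbox a b h).1) hfix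
  obtain rfl : c = v.maxAgainst := funext hc
  rw [← hN N le_rfl, hns_eq, hs_eq, SVal.le_minOthers_iff]
  exact ⟨fun h y => (eq_or_ne y x).elim (fun hyx => hyx ▸ le_rfl) (h y), fun h y _ => h y⟩

/-- With zero initial belief in the `s_x` and `¬s_x`, an option `x` is a
supremacy winner (i.e. `s_x` is not rejected by the upper revised valuation)
iff it minimizes `c_x = max_{y ≠ x} v(p_{yx})`: the minimax rule. -/
theorem stmt7 {I : Type*} [Fintype I] [DecidableEq I]
    (hcard : 2 ≤ Fintype.card I)
    (v : SVal I)
    (hbox : ∀ x y : I, x ≠ y → v.p x y ∈ Set.Icc (0:ℝ) 1)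
    (hs : ∀ x, v.s x = 0) (hns : ∀ x, v.ns x = 0)
    (c : I → ℝ) (hc : ∀ x, c x = sup0 {b : ℝ | ∃ y, y ≠ x ∧ b = v.p y x})
    (vstar : SVal I) (hstar : ∃ N : ℕ, ∀ n ≥ N, Tsup^[n] v = vstar)
    (x : I) :
    vstar.ns x ≤ vstar.s x ↔ ∀ y : I, c x ≤ c y :=
  stmt7_general hcard v hbox hs hns c hc vstar hstar x
end

section
/- Let f : I → [0,1] be nonnegative numbers with Σ_{x∈I} f_x ≤ 1, let g_x = Σ_{y≠x} f_y, and assume the sandwich inequality f_x ≤ v(p_{xy}) ≤ g_y for all distinct x, y ∈ I. Let the initial valuation have v(s_x) = f_x and v(¬s_x) = g_x for all x. Then the upper revised valuation v* satisfies: v*(s_x) = min over z ≠ x of g_z; v*(¬s_x) = g_x; and v*(p_{xy}) = max( v(p_{xy}), min over z ≠ x of g_z ) for all distinct x, y. -/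
/-!
The iterates `Tⁿ v` increase, so it suffices to squeeze them. From below: `T v` already
believes `s_x` to degree `min_{z ≠ x} g_z`, since this is the minimum of the beliefs in the
`¬s_z`, and one more step passes this value on to every `p_{xy}`. From above: the region of
valuations with `s_x ≤ min_{z ≠ x} g_z`, `¬s_x ≤ g_x` and `p_{xy} ≤ min(g_y, max(v(p_{xy}),
min_{z ≠ x} g_z))` contains `v` (by the sandwich inequality and `f_x ≤ g_z` for `z ≠ x`) and is
mapped into itself by `T`.
-/

section Revision

variable {I : Type*}

instance : Preorder (SVal I) := Preorder.lift fun u => (u.s, u.ns, u.p)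

lemma le_Tsup (u : SVal I) : u ≤ Tsup u :=
  ⟨fun _ => le_max_left _ _, fun _ => le_max_left _ _, fun _ _ => le_max_left _ _⟩

lemma monotone_iterate_Tsup (v : SVal I) : Monotone fun n => Tsup^[n] v :=
  monotone_nat_of_le_succ fun n => by
    rw [Function.iterate_succ_apply']
    exact le_Tsup _

lemma inf1_le_s8 {S : Set ℝ} (hS : BddBelow S) {a : ℝ} (ha : a ∈ S) : inf1 S ≤ a := by
  rw [inf1, if_pos ⟨a, ha⟩]
  exact csInf_le hS ha

lemma le_inf1 {S : Set ℝ} {c : ℝ} (h1 : c ≤ 1) (h : ∀ a ∈ S, c ≤ a) : c ≤ inf1 S := by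
  unfold inf1
  split_ifs with hne
  · exact le_csInf hne h
  · exact h1

lemma inf1_mono_of_le {ι : Type*} [Finite ι] {P : ι → Prop} {F G : ι → ℝ}
    (h : ∀ y, P y → F y ≤ G y) :
    inf1 {b | ∃ y, P y ∧ b = F y} ≤ inf1 {b | ∃ y, P y ∧ b = G y} := by
  have hbdd : BddBelow {b | ∃ y, P y ∧ b = F y} :=
    (Set.finite_range F).bddBelow.mono (by rintro _ ⟨y, -, rfl⟩; exact ⟨y, rfl⟩)
  unfold inf1
  split_ifs with hF hG hG
  · exact le_csInf hG (by
      rintro _ ⟨y, hy, rfl⟩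
      exact (csInf_le hbdd ⟨y, hy, rfl⟩).trans (h y hy))
  · obtain ⟨_, y, hy, rfl⟩ := hF
    exact absurd ⟨G y, y, hy, rfl⟩ hG
  · obtain ⟨_, y, hy, rfl⟩ := hG
    exact absurd ⟨F y, y, hy, rfl⟩ hF
  · rfl

noncomputable def minExcept (g : I → ℝ) (x : I) : ℝ := inf1 {b : ℝ | ∃ z, z ≠ x ∧ b = g z}

lemma minExcept_le [Finite I] (g : I → ℝ) {x z : I} (hz : z ≠ x) : minExcept g x ≤ g z :=
  inf1_le_s8 ((Set.finite_range g).bddBelow.mono (by rintro _ ⟨z, -, rfl⟩; exact ⟨z, rfl⟩))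
    ⟨z, hz, rfl⟩

lemma le_minExcept {g : I → ℝ} {x : I} {c : ℝ} (h1 : c ≤ 1) (h : ∀ z, z ≠ x → c ≤ g z) :
    c ≤ minExcept g x :=
  le_inf1 h1 (by rintro _ ⟨z, hz, rfl⟩; exact h z hz)

noncomputable def revisedLimit (q : I → I → ℝ) (g : I → ℝ) : SVal I where
  s := minExcept g
  ns := g
  p x y := max (q x y) (minExcept g x)

lemma revisedLimit_le_Tsup_Tsup {v : SVal I} {g : I → ℝ} (hns : ∀ x, v.ns x = g x) :
    revisedLimit v.p g ≤ Tsup (Tsup v) := by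
  obtain rfl : v.ns = g := funext hns
  have hs : ∀ x, minExcept v.ns x ≤ (Tsup v).s x := fun x =>
    le_max_of_le_right (le_max_left _ _)
  have hv := le_Tsup v
  have hTv := le_Tsup (Tsup v)
  refine ⟨fun x => (hs x).trans (hTv.1 x), fun x => (hv.2.1 x).trans (hTv.2.1 x),
    fun x y => max_le ((hv.2.2 x y).trans (hTv.2.2 x y)) ?_⟩
  exact (hs x).trans (le_max_of_le_right (le_max_left _ _))

def UpperBounded (q : I → I → ℝ) (g : I → ℝ) (u : SVal I) : Prop :=
  (∀ x, u.s x ≤ minExcept g x) ∧ (∀ x, u.ns x ≤ g x) ∧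
    ∀ x y, x ≠ y → u.p x y ≤ g y ∧ u.p x y ≤ max (q x y) (minExcept g x)

section UpperBounded

variable [Finite I] {q : I → I → ℝ} {g : I → ℝ}

lemma upperBounded_Tsup (hg0 : ∀ x, 0 ≤ g x) (hg1 : ∀ x, g x ≤ 1) {u : SVal I}
    (hu : UpperBounded q g u) : UpperBounded q g (Tsup u) := by
  obtain ⟨hs, hns, hp⟩ := hu
  refine ⟨fun x => ?_, fun x => ?_, fun x y hxy => ?_⟩
  · exact max_le (hs x) (max_le (inf1_mono_of_le fun y _ => hns y)
      (inf1_mono_of_le fun y hy => (hp x y hy.symm).1))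
  · exact max_le (hns x) (Real.sSup_le (by rintro _ ⟨y, hy, rfl⟩; exact (hp y x hy).1) (hg0 x))
  · have hbdd : BddBelow {b | ∃ z, z ≠ x ∧ z ≠ y ∧ b = u.p y z} :=
      (Set.finite_range (u.p y)).bddBelow.mono (by rintro _ ⟨z, -, -, rfl⟩; exact ⟨z, rfl⟩)
    have hmin : min (u.ns y) (inf1 {b | ∃ z, z ≠ x ∧ z ≠ y ∧ b = u.p y z}) ≤ minExcept g x := by
      refine le_minExcept ((min_le_left _ _).trans ((hns y).trans (hg1 y))) fun z hzx => ?_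
      obtain rfl | hzy := eq_or_ne z y
      · exact (min_le_left _ _).trans (hns _)
      · exact (min_le_right _ _).trans
          ((inf1_le_s8 hbdd ⟨z, hzx, hzy, rfl⟩).trans (hp y z hzy.symm).1)
    exact ⟨max_le (hp x y hxy).1
        (max_le ((hs x).trans (minExcept_le g hxy.symm)) ((min_le_left _ _).trans (hns y))),
      max_le (hp x y hxy).2
        (max_le ((hs x).trans (le_max_right _ _)) (hmin.trans (le_max_right _ _)))⟩

lemma upperBounded_iterate_Tsup (hg0 : ∀ x, 0 ≤ g x) (hg1 : ∀ x, g x ≤ 1) {u : SVal I}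
    (hu : UpperBounded q g u) (n : ℕ) : UpperBounded q g (Tsup^[n] u) :=
  Function.Iterate.rec (UpperBounded q g) hu (fun _ h => upperBounded_Tsup hg0 hg1 h) n

end UpperBounded

end Revision

theorem stmt8_general {I : Type*} [Fintype I] [DecidableEq I]
    (v : SVal I)
    (f g : I → ℝ)
    (hf0 : ∀ x, 0 ≤ f x) (hf1 : ∀ x, f x ≤ 1) (hfsum : ∑ x, f x ≤ 1)
    (hg : ∀ x, g x = ∑ y ∈ Finset.univ.erase x, f y)
    (hsandwich : ∀ x y : I, x ≠ y → f x ≤ v.p x y ∧ v.p x y ≤ g y)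
    (hs : ∀ x, v.s x = f x) (hns : ∀ x, v.ns x = g x)
    (vstar : SVal I) (hstar : ∃ N : ℕ, ∀ n ≥ N, Tsup^[n] v = vstar) :
    (∀ x, vstar.s x = inf1 {b : ℝ | ∃ z, z ≠ x ∧ b = g z}) ∧
    (∀ x, vstar.ns x = g x) ∧
    (∀ x y : I, x ≠ y →
      vstar.p x y = max (v.p x y) (inf1 {b : ℝ | ∃ z, z ≠ x ∧ b = g z})) := by
  have hg0 (x : I) : 0 ≤ g x := by
    rw [hg]
    exact Finset.sum_nonneg fun y _ => hf0 y
  have hg1 (x : I) : g x ≤ 1 := by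
    rw [hg]
    exact (Finset.sum_le_sum_of_subset_of_nonneg (Finset.erase_subset x _)
      fun y _ _ => hf0 y).trans hfsum
  have hfg (x y : I) (hxy : x ≠ y) : f x ≤ g y := by
    rw [hg]
    exact Finset.single_le_sum (fun z _ => hf0 z) (Finset.mem_erase.2 ⟨hxy, Finset.mem_univ x⟩)
  have hv : UpperBounded v.p g v :=
    ⟨fun x => (hs x).trans_le (le_minExcept (hf1 x) fun z hz => hfg x z hz.symm),
      fun x => (hns x).le, fun x y hxy => ⟨(hsandwich x y hxy).2, le_max_left _ _⟩⟩
  obtain ⟨N, hN⟩ := hstar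
  obtain rfl : Tsup^[N + 2] v = vstar := hN _ (by omega)
  obtain ⟨hs_le, hns_le, hp_le⟩ := upperBounded_iterate_Tsup hg0 hg1 hv (N + 2)
  obtain ⟨hs_ge, hns_ge, hp_ge⟩ :=
    (revisedLimit_le_Tsup_Tsup hns).trans (monotone_iterate_Tsup v (by omega : 2 ≤ N + 2))
  exact ⟨fun x => (hs_le x).antisymm (hs_ge x), fun x => (hns_le x).antisymm (hns_ge x),
    fun x y hxy => (hp_le x y hxy).2.antisymm (hp_ge x y)⟩

/-- Plurality: with initial beliefs `v(s_x) = f_x` (plurality fraction) and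
`v(¬s_x) = g_x = Σ_{y ≠ x} f_y` (antiplurality fraction), and the sandwich
inequality `f_x ≤ v(p_{xy}) ≤ g_y`, the upper revised valuation of the
supremacy doctrine is given in terms of the `g_z`. -/
theorem stmt8 {I : Type*} [Fintype I] [DecidableEq I]
    (hcard : 2 ≤ Fintype.card I)
    (v : SVal I)
    (f g : I → ℝ)
    (hf0 : ∀ x, 0 ≤ f x) (hf1 : ∀ x, f x ≤ 1) (hfsum : ∑ x, f x ≤ 1)
    (hg : ∀ x, g x = ∑ y ∈ Finset.univ.erase x, f y)
    (hsandwich : ∀ x y : I, x ≠ y → f x ≤ v.p x y ∧ v.p x y ≤ g y)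
    (hs : ∀ x, v.s x = f x) (hns : ∀ x, v.ns x = g x)
    (vstar : SVal I) (hstar : ∃ N : ℕ, ∀ n ≥ N, Tsup^[n] v = vstar) :
    (∀ x, vstar.s x = inf1 {b : ℝ | ∃ z, z ≠ x ∧ b = g z}) ∧
    (∀ x, vstar.ns x = g x) ∧
    (∀ x y : I, x ≠ y →
      vstar.p x y = max (v.p x y) (inf1 {b : ℝ | ∃ z, z ≠ x ∧ b = g z})) :=
  stmt8_general v f g hf0 hf1 hfsum hg hsandwich hs hns vstar hstar
end

section
/- Assume v(p_{xy}) + v(p_{yx}) ≤ 1 for all distinct x, y ∈ I and let the initial valuation satisfy v(t_x) = v(¬t_x) = 0 for all x. If a ∈ I is a Condorcet winner, i.e., v(p_{ay}) > 1/2 for every y ≠ a, then the symmetric prominence method accepts a as a prominent option: the upper revised valuation satisfies v*(t_a) > v*(¬t_a). -/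
/-!
Let `m = min_{y ≠ a} v(p_{ay}) > 1/2`. Revision can only raise values, and the first step already
gives `t_a` the value `m`. On the other hand every literal that could ever support `¬t_a`,
namely `¬t_a`, `p_{ya}` and `t_y` for `y ≠ a`, starts at most `1 - m < 1/2` (because
`v(p_{ya}) ≤ 1 - v(p_{ay})`), and each clause deriving one of them has a premise of the same kind,
so they stay below `1 - m` forever.
-/

/-- A valuation for prominence doctrines: degrees of belief for the literals
`t_x` ("x is prominent"), `¬t_x`, and `p_{xy}` ("x is preferable to y", for
distinct `x, y`), under the identification `¬p_{xy} = p_{yx}`. -/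
structure PVal (I : Type*) where
  t : I → ℝ
  nt : I → ℝ
  p : I → I → ℝ

/-- The one-step revision operator associated with the symmetric prominence
doctrine, whose clauses are `t_x ∨ ⋁_{y ≠ x} p_{yx}` and `¬t_x ∨ ⋁_{y ≠ x} p_{xy}`. -/
noncomputable def Tsym {I : Type*} (v : PVal I) : PVal I where
  t := fun x => max (v.t x) (inf1 {b : ℝ | ∃ y, y ≠ x ∧ b = v.p x y})
  nt := fun x => max (v.nt x) (inf1 {b : ℝ | ∃ y, y ≠ x ∧ b = v.p y x})
  p := fun x y => max (v.p x y)
    (max (min (v.t x) (inf1 {b : ℝ | ∃ z, z ≠ x ∧ z ≠ y ∧ b = v.p z x}))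
         (min (v.nt y) (inf1 {b : ℝ | ∃ z, z ≠ x ∧ z ≠ y ∧ b = v.p y z})))

section inf1

variable {ι : Type*} (f : ι → ℝ) (P : ι → Prop)

theorem inf1_le_of_mem [Finite ι] {y : ι} (hy : P y) : inf1 {b | ∃ y, P y ∧ b = f y} ≤ f y := by
  have hfin : {b | ∃ y, P y ∧ b = f y}.Finite :=
    (Set.finite_range f).subset fun _ ⟨y, _, hb⟩ => ⟨y, hb.symm⟩
  rw [inf1, if_pos ⟨f y, y, hy, rfl⟩]
  exact csInf_le hfin.bddBelow ⟨y, hy, rfl⟩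

theorem le_inf1_of_forall_le {m : ℝ} {y₀ : ι} (hy₀ : P y₀) (h : ∀ y, P y → m ≤ f y) :
    m ≤ inf1 {b | ∃ y, P y ∧ b = f y} := by
  rw [inf1, if_pos ⟨f y₀, y₀, hy₀, rfl⟩]
  exact le_csInf ⟨f y₀, y₀, hy₀, rfl⟩ fun _ ⟨y, hy, hb⟩ => hb ▸ h y hy

end inf1

namespace Tsym

variable {I : Type*}

theorem t_le (v : PVal I) (x : I) : v.t x ≤ (Tsym v).t x := le_max_left _ _

theorem monotone_iterate_t (v : PVal I) (x : I) : Monotone fun n => (Tsym^[n] v).t x :=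
  monotone_nat_of_le_succ fun n => by
    simpa only [Function.iterate_succ_apply'] using t_le (Tsym^[n] v) x

theorem le_t_of_forall_le {v : PVal I} {x y₀ : I} (hy₀ : y₀ ≠ x) {m : ℝ}
    (h : ∀ y, y ≠ x → m ≤ v.p x y) : m ≤ (Tsym v).t x :=
  (le_inf1_of_forall_le (v.p x) (· ≠ x) hy₀ h).trans (le_max_right _ _)

def RejectBound (v : PVal I) (a : I) (c : ℝ) : Prop :=
  v.nt a ≤ c ∧ (∀ y, y ≠ a → v.t y ≤ c) ∧ ∀ y, y ≠ a → v.p y a ≤ c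

variable [Finite I] {a y₀ : I} {c : ℝ}

theorem RejectBound.tsym {v : PVal I} (hy₀ : y₀ ≠ a) (h : RejectBound v a c) :
    RejectBound (Tsym v) a c := by
  obtain ⟨hnt, ht, hp⟩ := h
  refine ⟨max_le hnt ?_, fun y hy => max_le (ht y hy) ?_, fun y hy => max_le (hp y hy) ?_⟩
  · exact (inf1_le_of_mem (v.p · a) (· ≠ a) hy₀).trans (hp y₀ hy₀)
  · exact (inf1_le_of_mem (v.p y) (· ≠ y) (Ne.symm hy)).trans (hp y hy)
  · exact max_le ((min_le_left _ _).trans (ht y hy)) ((min_le_left _ _).trans hnt)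

theorem RejectBound.iterate {v : PVal I} (hy₀ : y₀ ≠ a) (h : RejectBound v a c) (n : ℕ) :
    RejectBound (Tsym^[n] v) a c := by
  induction n with
  | zero => exact h
  | succ n ih => simpa only [Function.iterate_succ_apply'] using ih.tsym hy₀

end Tsym

open Tsym in
theorem stmt12_general {I : Type*} [Fintype I]
    (hcard : 2 ≤ Fintype.card I)
    (v : PVal I)
    (hbox : ∀ x y : I, x ≠ y → v.p x y ∈ Set.Icc (0:ℝ) 1)
    (hsum : ∀ x y : I, x ≠ y → v.p x y + v.p y x ≤ 1)
    (ht : ∀ x, v.t x = 0) (hnt : ∀ x, v.nt x = 0)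
    (vstar : PVal I) (hstar : ∃ N : ℕ, ∀ n ≥ N, Tsym^[n] v = vstar)
    (a : I) (hcondorcet : ∀ y : I, y ≠ a → 1 / 2 < v.p a y) :
    vstar.nt a < vstar.t a := by
  obtain ⟨y₀, hy₀⟩ := Fintype.exists_ne_of_one_lt_card hcard a
  have : Nonempty {y // y ≠ a} := ⟨⟨y₀, hy₀⟩⟩
  obtain ⟨⟨y₁, hy₁⟩, hmin⟩ := Finite.exists_min fun y : {y // y ≠ a} => v.p a y
  have hmin' : ∀ y, y ≠ a → v.p a y₁ ≤ v.p a y := fun y hy => hmin ⟨y, hy⟩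
  have hhalf := hcondorcet y₁ hy₁
  have hle_one := (hbox a y₁ hy₁.symm).2
  have hinit : RejectBound v a (1 - v.p a y₁) :=
    ⟨by linarith [hnt a], fun y _ => by linarith [ht y],
      fun y hy => by linarith [hsum a y (Ne.symm hy), hmin' y hy]⟩
  obtain ⟨N, hN⟩ := hstar
  rw [← hN (N + 1) N.le_succ]
  have hreject := (hinit.iterate hy₀ (N + 1)).1
  have haccept : v.p a y₁ ≤ (Tsym^[N + 1] v).t a :=
    calc v.p a y₁ ≤ (Tsym^[1] v).t a := le_t_of_forall_le hy₀ hmin'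
      _ ≤ (Tsym^[N + 1] v).t a := monotone_iterate_t v a (by omega)
  linarith

/-- A Condorcet winner is always accepted as a prominent option by the
symmetric prominence method. -/
theorem stmt12 {I : Type*} [Fintype I] [DecidableEq I]
    (hcard : 2 ≤ Fintype.card I)
    (v : PVal I)
    (hbox : ∀ x y : I, x ≠ y → v.p x y ∈ Set.Icc (0:ℝ) 1)
    (hsum : ∀ x y : I, x ≠ y → v.p x y + v.p y x ≤ 1)
    (ht : ∀ x, v.t x = 0) (hnt : ∀ x, v.nt x = 0)
    (vstar : PVal I) (hstar : ∃ N : ℕ, ∀ n ≥ N, Tsym^[n] v = vstar)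
    (a : I) (hcondorcet : ∀ y : I, y ≠ a → 1 / 2 < v.p a y) :
    vstar.nt a < vstar.t a :=
  stmt12_general hcard v hbox hsum ht hnt vstar hstar a hcondorcet
end

section
/- Assume v(p_{xy}) + v(p_{yx}) ≤ 1 for all distinct x, y ∈ I and let the initial valuation satisfy v(t_x) = v(¬t_x) = 0 for all x. If a ∈ I is a Condorcet loser, i.e., v(p_{ya}) > 1/2 for every y ≠ a, then the symmetric prominence method rejects a as a prominent option: the upper revised valuation satisfies v*(¬t_a) > v*(t_a). -/
/-!
Let `m > 1/2` be the least initial belief that an opponent beats the Condorcet loser `a`.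
Every literal that speaks for `a` — `t_a`, `p_{ay}` and `¬t_y` for `y ≠ a` — starts at most
`c = max 0 (1 - m) < m`, and each revision step only builds such a literal out of another one,
so the cap `c` survives all iterates. Meanwhile the beliefs `p_{ya}` never decrease, so the
fixed point `v*` has `v*(¬t_a) ≥ min_{y ≠ a} v*(p_{ya}) ≥ m > c ≥ v*(t_a)`.
-/

section Inf1

variable {I : Type*} (f : I → ℝ) (P : I → Prop)

lemma finite_setOf_exists_eq [Finite I] : {b | ∃ y, P y ∧ b = f y}.Finite := by
  refine ((Set.toFinite {y | P y}).image f).subset ?_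
  rintro _ ⟨y, hy, rfl⟩
  exact ⟨y, hy, rfl⟩

lemma inf1_setOf_le [Finite I] {y : I} (hy : P y) : inf1 {b | ∃ y, P y ∧ b = f y} ≤ f y := by
  rw [inf1, if_pos ⟨f y, y, hy, rfl⟩]
  exact csInf_le (finite_setOf_exists_eq f P).bddBelow ⟨y, hy, rfl⟩

lemma exists_inf1_setOf_eq [Finite I] (hP : ∃ y, P y) :
    ∃ y, P y ∧ inf1 {b | ∃ y, P y ∧ b = f y} = f y := by
  obtain ⟨y, hy⟩ := hP
  have hne : {b | ∃ y, P y ∧ b = f y}.Nonempty := ⟨f y, y, hy, rfl⟩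
  obtain ⟨z, hz, hmin⟩ := hne.csInf_mem (finite_setOf_exists_eq f P)
  exact ⟨z, hz, by rw [inf1, if_pos hne, hmin]⟩

lemma le_inf1_setOf {c : ℝ} (hP : ∃ y, P y) (h : ∀ y, P y → c ≤ f y) :
    c ≤ inf1 {b | ∃ y, P y ∧ b = f y} := by
  obtain ⟨y, hy⟩ := hP
  rw [inf1, if_pos ⟨f y, y, hy, rfl⟩]
  exact le_csInf ⟨f y, y, hy, rfl⟩ fun _ ⟨z, hz, hb⟩ => hb ▸ h z hz

end Inf1

namespace PVal

variable {I : Type*}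

lemma p_le_Tsym_p (w : PVal I) (x y : I) : w.p x y ≤ (Tsym w).p x y :=
  le_max_left _ _

lemma p_le_iterate_Tsym_p (w : PVal I) (x y : I) (n : ℕ) : w.p x y ≤ (Tsym^[n] w).p x y := by
  induction n with
  | zero => rfl
  | succ n ih =>
    rw [Function.iterate_succ_apply']
    exact ih.trans (p_le_Tsym_p _ x y)

lemma le_Tsym_nt (w : PVal I) {x : I} {c : ℝ} (hx : ∃ y, y ≠ x)
    (h : ∀ y, y ≠ x → c ≤ w.p y x) :
    c ≤ (Tsym w).nt x :=
  (le_inf1_setOf (fun y => w.p y x) (· ≠ x) hx h).trans (le_max_right _ _)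

structure SupportCap (w : PVal I) (a : I) (c : ℝ) : Prop where
  t_le : w.t a ≤ c
  p_le : ∀ y, y ≠ a → w.p a y ≤ c
  nt_le : ∀ y, y ≠ a → w.nt y ≤ c

variable [Finite I] {w : PVal I} {a : I} {c : ℝ}

lemma supportCap_Tsym (hw : w.SupportCap a c) (ha : ∃ y, y ≠ a) : (Tsym w).SupportCap a c where
  t_le := by
    obtain ⟨y, hy⟩ := ha
    exact max_le hw.t_le ((inf1_setOf_le (w.p a) (· ≠ a) hy).trans (hw.p_le y hy))
  p_le y hy := max_le (hw.p_le y hy)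
    (max_le ((min_le_left _ _).trans hw.t_le) ((min_le_left _ _).trans (hw.nt_le y hy)))
  nt_le y hy := max_le (hw.nt_le y hy)
    ((inf1_setOf_le (fun z => w.p z y) (· ≠ y) hy.symm).trans (hw.p_le y hy))

lemma supportCap_iterate_Tsym (hw : w.SupportCap a c) (ha : ∃ y, y ≠ a) (n : ℕ) :
    (Tsym^[n] w).SupportCap a c := by
  induction n with
  | zero => exact hw
  | succ n ih =>
    rw [Function.iterate_succ_apply']
    exact supportCap_Tsym ih ha

end PVal

theorem stmt13_general {I : Type*} [Fintype I]
    (hcard : 2 ≤ Fintype.card I)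
    (v : PVal I)
    (hsum : ∀ x y : I, x ≠ y → v.p x y + v.p y x ≤ 1)
    (ht : ∀ x, v.t x = 0) (hnt : ∀ x, v.nt x = 0)
    (vstar : PVal I) (hstar : ∃ N : ℕ, ∀ n ≥ N, Tsym^[n] v = vstar)
    (a : I) (hloser : ∀ y : I, y ≠ a → 1 / 2 < v.p y a) :
    vstar.t a < vstar.nt a := by
  obtain ⟨N, hN⟩ := hstar
  have hfix : Tsym vstar = vstar := by
    have h := hN (N + 1) N.le_succ
    rwa [Function.iterate_succ_apply', hN N le_rfl] at h
  have ha : ∃ y, y ≠ a := Fintype.exists_ne_of_one_lt_card hcard a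
  obtain ⟨ym, hym, hm⟩ := exists_inf1_setOf_eq (fun y => v.p y a) (· ≠ a) ha
  set m := inf1 {b | ∃ y, y ≠ a ∧ b = v.p y a}
  have hm_le : ∀ y, y ≠ a → m ≤ v.p y a := fun y hy =>
    inf1_setOf_le (fun y => v.p y a) (· ≠ a) hy
  have hm_half : 1 / 2 < m := hm ▸ hloser ym hym
  have hcap : vstar.SupportCap a (max 0 (1 - m)) := by
    rw [← hN N le_rfl]
    refine PVal.supportCap_iterate_Tsym ⟨?_, fun y hy => ?_, fun y hy => ?_⟩ ha N
    · exact (ht a).trans_le (le_max_left _ _)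
    · exact le_max_of_le_right (by linarith [hsum a y hy.symm, hm_le y hy])
    · exact (hnt y).trans_le (le_max_left _ _)
  have hnt_a : m ≤ vstar.nt a := hfix ▸ vstar.le_Tsym_nt ha fun y hy =>
    (hm_le y hy).trans (hN N le_rfl ▸ v.p_le_iterate_Tsym_p y a N)
  calc vstar.t a ≤ max 0 (1 - m) := hcap.t_le
    _ < m := max_lt (by linarith) (by linarith)
    _ ≤ vstar.nt a := hnt_a

/-- A Condorcet loser is always rejected as a prominent option by the
symmetric prominence method. -/
theorem stmt13 {I : Type*} [Fintype I] [DecidableEq I]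
    (hcard : 2 ≤ Fintype.card I)
    (v : PVal I)
    (hbox : ∀ x y : I, x ≠ y → v.p x y ∈ Set.Icc (0:ℝ) 1)
    (hsum : ∀ x y : I, x ≠ y → v.p x y + v.p y x ≤ 1)
    (ht : ∀ x, v.t x = 0) (hnt : ∀ x, v.nt x = 0)
    (vstar : PVal I) (hstar : ∃ N : ℕ, ∀ n ≥ N, Tsym^[n] v = vstar)
    (a : I) (hloser : ∀ y : I, y ≠ a → 1 / 2 < v.p y a) :
    vstar.t a < vstar.nt a :=
  stmt13_general hcard v hsum ht hnt vstar hstar a hloser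
end

section
/- Assume v(p_{xy}) + v(p_{yx}) ≤ 1 for all distinct x, y ∈ I and initial values v(t_x) = v(¬t_x) = 0 for all x. If S ⊆ I is a nonempty majority-dominant set, i.e., v(p_{xy}) > 1/2 for every x ∈ S and y ∉ S, then the upper revised valuation v* satisfies v*(p_{yx}) ≤ 1/2 whenever x ∈ S and y ∉ S. Consequently, for every x ∈ S and y ∉ S the comprehensive prominence method accepts p_{xy}: v*(p_{xy}) > v*(p_{yx}). -/
/-- The one-step revision operator associated with the comprehensive prominence
doctrine, whose clauses are indexed by (nonempty) subsets `X ⊆ I`: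
`⋁_{r ∈ X} t_r ∨ ⋁_{r ∈ X, s ∉ X} p_{sr}`, `¬t_y ∨ ⋁_{r ∈ X, s ∉ X} p_{sr}`
for `y ∉ X`, and `¬t_x ∨ ¬t_y`; the min over an empty index set is `1` and
the max over an empty index set is `0`. -/
noncomputable def Tcp {I : Type*} (v : PVal I) : PVal I where
  t := fun x => max (v.t x)
    (sup0 {a : ℝ | ∃ X : Finset I, x ∈ X ∧
      a = min (inf1 {b : ℝ | ∃ r ∈ X, r ≠ x ∧ b = v.nt r})
              (inf1 {b : ℝ | ∃ r ∈ X, ∃ s, s ∉ X ∧ b = v.p r s})})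
  nt := fun y => max (v.nt y)
    (max (sup0 {a : ℝ | ∃ r, r ≠ y ∧ a = v.t r})
         (sup0 {a : ℝ | ∃ X : Finset I, X.Nonempty ∧ y ∉ X ∧
           a = inf1 {b : ℝ | ∃ r ∈ X, ∃ s, s ∉ X ∧ b = v.p r s}}))
  p := fun u w => max (v.p u w)
    (sup0 {a : ℝ | ∃ X : Finset I, w ∈ X ∧ u ∉ X ∧
      a = min (max (inf1 {b : ℝ | ∃ r ∈ X, b = v.nt r})
                   (sup0 {b : ℝ | ∃ s, s ∉ X ∧ b = v.t s}))
              (inf1 {b : ℝ | ∃ r ∈ X, ∃ s, s ∉ X ∧ ¬(r = w ∧ s = u) ∧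
                b = v.p r s})})

open Relation

lemma sup0_le_s17 {s : Set ℝ} {c : ℝ} (h : ∀ a ∈ s, a ≤ c) (hc : 0 ≤ c) : sup0 s ≤ c :=
  Real.sSup_le h hc

lemma inf1_le_s17 {s : Set ℝ} {b c : ℝ} (hb : b ∈ s) (hbc : b ≤ c) (hc : 0 ≤ c) : inf1 s ≤ c := by
  rw [inf1, if_pos ⟨b, hb⟩]
  by_cases hs : BddBelow s
  · exact (csInf_le hs hb).trans hbc
  · rwa [Real.sInf_of_not_bddBelow hs]

section Tournament

variable {α : Type*} {A : α → α → Prop}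

def tieBreak (M lt : α → α → Prop) (x y : α) : Prop :=
  M x y ∨ (¬M y x ∧ lt x y)

lemma tieBreak_asymm {M lt : α → α → Prop} [Std.Asymm lt] (hM : ∀ x y, M x y → ¬M y x)
    {x y : α} (h : tieBreak M lt x y) : ¬tieBreak M lt y x := by
  rintro (hyx | ⟨hxy, hlt⟩) <;> rcases h with hxy' | ⟨hyx', hlt'⟩
  exacts [hM _ _ hxy' hyx, hyx' hyx, hxy hxy', asymm hlt hlt']

lemma tieBreak_total {M lt : α → α → Prop} [Std.Trichotomous lt] {x y : α} (hxy : x ≠ y) :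
    tieBreak M lt x y ∨ tieBreak M lt y x := by
  by_cases hM : M x y
  · exact .inl (.inl hM)
  by_cases hM' : M y x
  · exact .inr (.inl hM')
  rcases trichotomous_of lt x y with h | h | h
  exacts [.inl (.inr ⟨hM', h⟩), absurd h hxy, .inr (.inr ⟨hM, h⟩)]

lemma Finset.Nonempty.exists_forall_mem_reflTransGen {s : Finset α} (hs : s.Nonempty)
    (htot : ∀ x y, x ≠ y → A x y ∨ A y x) : ∃ z, ∀ w ∈ s, ReflTransGen A z w := by
  induction hs using Finset.Nonempty.cons_induction with
  | singleton a => exact ⟨a, by simp [ReflTransGen.refl]⟩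
  | cons a s has hs ih =>
    obtain ⟨z, hz⟩ := ih
    by_cases haz : a = z
    · subst haz
      exact ⟨a, (Finset.forall_mem_cons has _).mpr ⟨.refl, hz⟩⟩
    rcases htot a z haz with h | h
    · exact ⟨a, (Finset.forall_mem_cons has _).mpr ⟨.refl, fun w hw => (hz w hw).head h⟩⟩
    · exact ⟨z, (Finset.forall_mem_cons has _).mpr ⟨.single h, hz⟩⟩

lemma exists_forall_reflTransGen_of_total [Finite α] [Nonempty α]
    (htot : ∀ x y, x ≠ y → A x y ∨ A y x) : ∃ z, ∀ w, ReflTransGen A z w := by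
  have := Fintype.ofFinite α
  obtain ⟨z, hz⟩ := Finset.univ_nonempty.exists_forall_mem_reflTransGen htot
  exact ⟨z, fun w => hz w (Finset.mem_univ w)⟩

lemma Relation.ReflTransGen.exists_rel_into {X : Finset α} {a b : α} (hab : ReflTransGen A a b)
    (ha : a ∉ X) (hb : b ∈ X) : ∃ s ∉ X, ∃ r ∈ X, A s r := by
  induction hab with
  | refl => exact absurd hb ha
  | @tail c d _ hcd ih =>
    by_cases hc : c ∈ X
    · exact ih hc
    · exact ⟨c, hc, d, hb, hcd⟩

end Tournament

section Revision

variable {I : Type*}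

/-- Every literal that is false in the classical model where `z` alone is prominent and `x` is
preferred to `y` iff `A x y` has value at most `1/2`. -/
structure IsSoundAboveHalf (A : I → I → Prop) (z : I) (w : PVal I) : Prop where
  t : ∀ x, x ≠ z → w.t x ≤ 1 / 2
  nt : w.nt z ≤ 1 / 2
  p : ∀ x y, x ≠ y → ¬A x y → w.p x y ≤ 1 / 2

namespace IsSoundAboveHalf

variable {A : I → I → Prop} {z : I} {w : PVal I}

lemma p_le_half_of_rel (hw : IsSoundAboveHalf A z w) (hA : ∀ x y, A x y → ¬A y x) {r s : I}
    (h : A s r) : w.p r s ≤ 1 / 2 := by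
  have hrs : r ≠ s := by
    rintro rfl
    exact hA r r h h
  exact hw.p r s hrs (hA s r h)

variable (hw : IsSoundAboveHalf A z w) (hA : ∀ x y, A x y → ¬A y x)
  (hz : ∀ x, ReflTransGen A z x)
include hw hA hz

lemma tcp_t (x : I) (hxz : x ≠ z) : (Tcp w).t x ≤ 1 / 2 := by
  refine max_le (hw.t x hxz) (sup0_le_s17 ?_ (by norm_num))
  rintro _ ⟨X, hxX, rfl⟩
  by_cases hzX : z ∈ X
  · exact min_le_of_left_le (inf1_le_s17 ⟨z, hzX, hxz.symm, rfl⟩ hw.nt (by norm_num))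
  · obtain ⟨s, hs, r, hr, hsr⟩ := (hz x).exists_rel_into hzX hxX
    exact min_le_of_right_le
      (inf1_le_s17 ⟨r, hr, s, hs, rfl⟩ (hw.p_le_half_of_rel hA hsr) (by norm_num))

lemma tcp_nt : (Tcp w).nt z ≤ 1 / 2 := by
  refine max_le hw.nt (max_le (sup0_le_s17 ?_ (by norm_num)) (sup0_le_s17 ?_ (by norm_num)))
  · rintro _ ⟨r, hrz, rfl⟩
    exact hw.t r hrz
  · rintro _ ⟨X, ⟨x, hxX⟩, hzX, rfl⟩
    obtain ⟨s, hs, r, hr, hsr⟩ := (hz x).exists_rel_into hzX hxX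
    exact inf1_le_s17 ⟨r, hr, s, hs, rfl⟩ (hw.p_le_half_of_rel hA hsr) (by norm_num)

lemma tcp_p (u x : I) (hux : u ≠ x) (hA' : ¬A u x) : (Tcp w).p u x ≤ 1 / 2 := by
  refine max_le (hw.p u x hux hA') (sup0_le_s17 ?_ (by norm_num))
  rintro _ ⟨X, hxX, huX, rfl⟩
  by_cases hzX : z ∈ X
  · refine min_le_of_left_le (max_le (inf1_le_s17 ⟨z, hzX, rfl⟩ hw.nt (by norm_num)) ?_)
    refine sup0_le_s17 ?_ (by norm_num)
    rintro _ ⟨s, hs, rfl⟩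
    exact hw.t s (ne_of_mem_of_not_mem hzX hs).symm
  · obtain ⟨s, hs, r, hr, hsr⟩ := (hz x).exists_rel_into hzX hxX
    have hrs : ¬(r = x ∧ s = u) := by
      rintro ⟨rfl, rfl⟩
      exact hA' hsr
    exact min_le_of_right_le
      (inf1_le_s17 ⟨r, hr, s, hs, hrs, rfl⟩ (hw.p_le_half_of_rel hA hsr) (by norm_num))

lemma tcp : IsSoundAboveHalf A z (Tcp w) :=
  ⟨hw.tcp_t hA hz, hw.tcp_nt hA hz, hw.tcp_p hA hz⟩

lemma iterate_tcp (n : ℕ) : IsSoundAboveHalf A z (Tcp^[n] w) :=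
  Function.Iterate.rec _ hw (fun _ h => h.tcp hA hz) n

end IsSoundAboveHalf

lemma p_le_iterate_tcp_p (w : PVal I) (x y : I) (n : ℕ) : w.p x y ≤ (Tcp^[n] w).p x y :=
  Function.Iterate.rec (fun w' : PVal I => w.p x y ≤ w'.p x y) le_rfl
    (fun _ h => h.trans (le_max_left _ _)) n

theorem iterate_tcp_p_le_half [Finite I] {v : PVal I}
    (hsum : ∀ x y : I, x ≠ y → v.p x y + v.p y x ≤ 1)
    (ht : ∀ x, v.t x = 0) (hnt : ∀ x, v.nt x = 0)
    {x y : I} (hxy : x ≠ y) (h : 1 / 2 < v.p x y) (n : ℕ) : (Tcp^[n] v).p y x ≤ 1 / 2 := by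
  have : Nonempty I := ⟨x⟩
  let M : I → I → Prop := fun a b => a ≠ b ∧ 1 / 2 < v.p a b
  let A := tieBreak M WellOrderingRel
  have hM : ∀ a b, M a b → ¬M b a := fun a b hab hba => by
    linarith [hsum a b hab.1, hab.2, hba.2]
  have hA : ∀ a b, A a b → ¬A b a := fun _ _ => tieBreak_asymm hM
  obtain ⟨z, hz⟩ := exists_forall_reflTransGen_of_total (A := A) fun _ _ => tieBreak_total
  have hv : IsSoundAboveHalf A z v :=
    ⟨by simp [ht], by simp [hnt], fun a b hab hA' => not_lt.mp fun h' => hA' (.inl ⟨hab, h'⟩)⟩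
  exact (hv.iterate_tcp hA hz n).p_le_half_of_rel hA (.inl ⟨hxy, h⟩)

end Revision

theorem stmt17_general {I : Type*} [Fintype I]
    (v : PVal I)
    (hsum : ∀ x y : I, x ≠ y → v.p x y + v.p y x ≤ 1)
    (ht : ∀ x, v.t x = 0) (hnt : ∀ x, v.nt x = 0)
    (vstar : PVal I) (hstar : ∃ N : ℕ, ∀ n ≥ N, Tcp^[n] v = vstar)
    (S : Finset I)
    (hSdom : ∀ x ∈ S, ∀ y ∉ S, 1 / 2 < v.p x y) :
    (∀ x ∈ S, ∀ y ∉ S, vstar.p y x ≤ 1 / 2) ∧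
    (∀ x ∈ S, ∀ y ∉ S, vstar.p y x < vstar.p x y) := by
  obtain ⟨N, hN⟩ := hstar
  obtain rfl := hN N le_rfl
  have hle : ∀ x ∈ S, ∀ y ∉ S, (Tcp^[N] v).p y x ≤ 1 / 2 := fun x hx y hy =>
    iterate_tcp_p_le_half hsum ht hnt (ne_of_mem_of_not_mem hx hy) (hSdom x hx y hy) N
  refine ⟨hle, fun x hx y hy => ?_⟩
  calc (Tcp^[N] v).p y x ≤ 1 / 2 := hle x hx y hy
    _ < v.p x y := hSdom x hx y hy
    _ ≤ (Tcp^[N] v).p x y := p_le_iterate_tcp_p v x y N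

/-- Condorcet–Smith principle for comprehensive prominence: if `S` is a
majority-dominant set then `v*(p_{yx}) ≤ 1/2` for `x ∈ S`, `y ∉ S`;
consequently the comprehensive prominence method accepts `p_{xy}` for every
`x ∈ S` and `y ∉ S`. -/
theorem stmt17 {I : Type*} [Fintype I] [DecidableEq I]
    (hcard : 2 ≤ Fintype.card I)
    (v : PVal I)
    (hbox : ∀ x y : I, x ≠ y → v.p x y ∈ Set.Icc (0:ℝ) 1)
    (hsum : ∀ x y : I, x ≠ y → v.p x y + v.p y x ≤ 1)
    (ht : ∀ x, v.t x = 0) (hnt : ∀ x, v.nt x = 0)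
    (vstar : PVal I) (hstar : ∃ N : ℕ, ∀ n ≥ N, Tcp^[n] v = vstar)
    (S : Finset I) (hSne : S.Nonempty)
    (hSdom : ∀ x ∈ S, ∀ y ∉ S, 1 / 2 < v.p x y) :
    (∀ x ∈ S, ∀ y ∉ S, vstar.p y x ≤ 1 / 2) ∧
    (∀ x ∈ S, ∀ y ∉ S, vstar.p y x < vstar.p x y) :=
  stmt17_general v hsum ht hnt vstar hstar S hSdom
end
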